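/- arXiv:2008.04905 — 6 statements merged into one kernel-verified Lean document; each statement's English description precedes it below -/
import Mathlib

section
/- In an associative unital ℂ-algebra generated by elements A and B (with q ∈ ℂ, q ≠ 0, q^4 ≠ 1) satisfying A^2 = [2]_q A, B^2 = [2]_q B, ABA = [2]_q(AB+BA) − [3]_q A − [2]_q^2 B + [2]_q[3]_q, and BAB = [2]_q(AB+BA) − [3]_q B − [2]_q^2 A + [2]_q[3]_q, the element G := −[2]_q(A+B) + AB + BA + [2]_q^2 is central and satisfies G^2 = ([2]_q^2+1)G − [2]_q^2. -/
/-- In a ℂ-algebra generated by `a, b` satisfying the reduced presentation of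
`AW-bar(1/2,1/2,1/2)`, the element `G = −[2]_q(a+b) + ab + ba + [2]_q²` is central and
satisfies `G² = ([2]_q²+1)G − [2]_q²`.  Here `[2]_q = q+q⁻¹`, `[3]_q = q²+1+q⁻²`. -/
theorem G_central_and_quadratic {A : Type*} [Ring A] [Algebra ℂ A]
    (q : ℂ) (hq : q ≠ 0) (hq4 : q ^ 4 ≠ 1) (a b : A)
    (h1 : a ^ 2 = (q + q⁻¹) • a)
    (h2 : b ^ 2 = (q + q⁻¹) • b)
    (h3 : a * b * a = (q + q⁻¹) • (a * b + b * a) - (q ^ 2 + 1 + q⁻¹ ^ 2) • a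
        - ((q + q⁻¹) ^ 2) • b + ((q + q⁻¹) * (q ^ 2 + 1 + q⁻¹ ^ 2)) • (1 : A))
    (h4 : b * a * b = (q + q⁻¹) • (a * b + b * a) - (q ^ 2 + 1 + q⁻¹ ^ 2) • b
        - ((q + q⁻¹) ^ 2) • a + ((q + q⁻¹) * (q ^ 2 + 1 + q⁻¹ ^ 2)) • (1 : A))
    (G : A)
    (hG : G = -((q + q⁻¹) • (a + b)) + a * b + b * a + ((q + q⁻¹) ^ 2) • (1 : A)) :
    (∀ x ∈ Algebra.adjoin ℂ ({a, b} : Set A), Commute G x) ∧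
    G ^ 2 = ((q + q⁻¹) ^ 2 + 1) • G - ((q + q⁻¹) ^ 2) • (1 : A) := by
  have haa : a * a = (q + q⁻¹) • a := by rw [← sq, h1]
  have hbb : b * b = (q + q⁻¹) • b := by rw [← sq, h2]
  have hc : (q ^ 2 + 1 + q⁻¹ ^ 2 : ℂ) = (q + q⁻¹) ^ 2 - 1 := by
    field_simp; ring
  have hGa : G * a = a * b * a := by
    rw [hG]
    simp only [add_mul, sub_mul, neg_mul, smul_mul_assoc, one_mul, mul_assoc, haa,
      mul_smul_comm, smul_add, smul_smul]
    module
  have haG : a * G = a * b * a := by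
    rw [hG]
    simp only [mul_add, mul_sub, mul_neg, mul_smul_comm, mul_one, smul_add,
      ← mul_assoc, haa, smul_mul_assoc, smul_smul]
    module
  have hGb : G * b = b * a * b := by
    rw [hG]
    simp only [add_mul, sub_mul, neg_mul, smul_mul_assoc, one_mul, mul_assoc, hbb,
      mul_smul_comm, smul_add, smul_smul]
    module
  have hbG : b * G = b * a * b := by
    rw [hG]
    simp only [mul_add, mul_sub, mul_neg, mul_smul_comm, mul_one, smul_add,
      ← mul_assoc, hbb, smul_mul_assoc, smul_smul]
    module
  have hca : Commute G a := by unfold Commute SemiconjBy; rw [hGa, haG]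
  have hcb : Commute G b := by unfold Commute SemiconjBy; rw [hGb, hbG]
  constructor
  · intro x hx
    induction hx using Algebra.adjoin_induction with
    | mem y hy => rcases hy with rfl | rfl
                  · exact hca
                  · exact hcb
    | algebraMap r => exact (Algebra.commutes r G).symm
    | add x y _ _ hx hy => exact hx.add_right hy
    | mul x y _ _ hx hy => exact hx.mul_right hy
  · -- a * (b*a*b) = ab + c2•aba - c2•a
    have e1 : a * (b * a * b) = a * b + (q + q⁻¹) • (a * b * a) - (q + q⁻¹) • a := by
      rw [h4, hc]
      simp only [mul_add, mul_sub, mul_smul_comm, mul_one, smul_add,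
        ← mul_assoc, haa, smul_mul_assoc, smul_smul]
      module
    have e2 : b * (a * b * a) = b * a + (q + q⁻¹) • (b * a * b) - (q + q⁻¹) • b := by
      rw [h3, hc]
      simp only [mul_add, mul_sub, mul_smul_comm, mul_one, smul_add,
        ← mul_assoc, hbb, smul_mul_assoc, smul_smul]
      module
    have key : G ^ 2 = -((q + q⁻¹) • (a * G + b * G)) + a * (b * G)
        + b * (a * G) + ((q + q⁻¹) ^ 2) • G := by
      rw [sq]
      nth_rewrite 1 [hG]
      simp only [add_mul, neg_mul, smul_mul_assoc, one_mul, smul_add, mul_assoc]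
    rw [key, haG, hbG, e1, e2, hG]
    simp only [smul_add, smul_sub, smul_smul]
    module
end

section
/- Let q ∈ ℂ with q ≠ 0 and q + q^{-1} ≠ 0. An associative unital ℂ-algebra with generators A, B satisfies the relations A^2 = [2]_q A, B^2 = [2]_q B, ABA = [2]_q(AB+BA) − [3]_q A − [2]_q^2 B + [2]_q[3]_q, BAB = [2]_q(AB+BA) − [3]_q B − [2]_q^2 A + [2]_q[3]_q if and only if the elements σ1 := (q+q^{-1}) − A and σ2 := (q+q^{-1}) − B satisfy the Temperley–Lieb relations σ1^2 = (q+q^{-1})σ1, σ2^2 = (q+q^{-1})σ2, σ1σ2σ1 = σ1, σ2σ1σ2 = σ2. -/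
set_option maxHeartbeats 1600000 in
/-- The reduced presentation of `AW-bar(1/2,1/2,1/2)` on generators `a, b` holds iff
`σ₁ = (q+q⁻¹) − a` and `σ₂ = (q+q⁻¹) − b` satisfy the Temperley–Lieb relations of
`TL₃(q)`.  Here `[2]_q = q+q⁻¹`, `[3]_q = q²+1+q⁻²`. -/
theorem AWbar_iff_TemperleyLieb {A : Type*} [Ring A] [Algebra ℂ A]
    (q : ℂ) (hq : q ≠ 0) (hq2 : q + q⁻¹ ≠ 0) (a b : A) :
    (a ^ 2 = (q + q⁻¹) • a ∧ b ^ 2 = (q + q⁻¹) • b ∧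
      a * b * a = (q + q⁻¹) • (a * b + b * a) - (q ^ 2 + 1 + q⁻¹ ^ 2) • a
        - ((q + q⁻¹) ^ 2) • b + ((q + q⁻¹) * (q ^ 2 + 1 + q⁻¹ ^ 2)) • (1 : A) ∧
      b * a * b = (q + q⁻¹) • (a * b + b * a) - (q ^ 2 + 1 + q⁻¹ ^ 2) • b
        - ((q + q⁻¹) ^ 2) • a + ((q + q⁻¹) * (q ^ 2 + 1 + q⁻¹ ^ 2)) • (1 : A))
    ↔ (((q + q⁻¹) • (1 : A) - a) ^ 2 = (q + q⁻¹) • ((q + q⁻¹) • (1 : A) - a) ∧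
       ((q + q⁻¹) • (1 : A) - b) ^ 2 = (q + q⁻¹) • ((q + q⁻¹) • (1 : A) - b) ∧
       ((q + q⁻¹) • (1 : A) - a) * ((q + q⁻¹) • (1 : A) - b) * ((q + q⁻¹) • (1 : A) - a)
         = (q + q⁻¹) • (1 : A) - a ∧
       ((q + q⁻¹) • (1 : A) - b) * ((q + q⁻¹) • (1 : A) - a) * ((q + q⁻¹) • (1 : A) - b)
         = (q + q⁻¹) • (1 : A) - b) := by
  have hγ : q ^ 2 + 1 + q⁻¹ ^ 2 = (q + q⁻¹) ^ 2 - 1 := by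
    field_simp
    ring
  rw [hγ]
  constructor
  · rintro ⟨h1, h2, h3, h4⟩
    refine ⟨?_, ?_, ?_, ?_⟩
    · linear_combination (norm :=
        (simp only [pow_two, sub_mul, mul_sub, add_mul, mul_add, smul_mul_assoc, mul_smul_comm,
          smul_sub, smul_add, smul_smul, mul_one, one_mul]; module)) h1
    · linear_combination (norm :=
        (simp only [pow_two, sub_mul, mul_sub, add_mul, mul_add, smul_mul_assoc, mul_smul_comm,
          smul_sub, smul_add, smul_smul, mul_one, one_mul]; module)) h2
    · linear_combination (norm :=
        (simp only [pow_two, sub_mul, mul_sub, add_mul, mul_add, smul_mul_assoc, mul_smul_comm,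
          smul_sub, smul_add, smul_smul, mul_one, one_mul]; module)) (q + q⁻¹) • h1 - h3
    · linear_combination (norm :=
        (simp only [pow_two, sub_mul, mul_sub, add_mul, mul_add, smul_mul_assoc, mul_smul_comm,
          smul_sub, smul_add, smul_smul, mul_one, one_mul]; module)) (q + q⁻¹) • h2 - h4
  · rintro ⟨h1, h2, h3, h4⟩
    refine ⟨?_, ?_, ?_, ?_⟩
    · linear_combination (norm :=
        (simp only [pow_two, sub_mul, mul_sub, add_mul, mul_add, smul_mul_assoc, mul_smul_comm,
          smul_sub, smul_add, smul_smul, mul_one, one_mul]; module)) h1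
    · linear_combination (norm :=
        (simp only [pow_two, sub_mul, mul_sub, add_mul, mul_add, smul_mul_assoc, mul_smul_comm,
          smul_sub, smul_add, smul_smul, mul_one, one_mul]; module)) h2
    · linear_combination (norm :=
        (simp only [pow_two, sub_mul, mul_sub, add_mul, mul_add, smul_mul_assoc, mul_smul_comm,
          smul_sub, smul_add, smul_smul, mul_one, one_mul]; module)) (q + q⁻¹) • h1 - h3
    · linear_combination (norm :=
        (simp only [pow_two, sub_mul, mul_sub, add_mul, mul_add, smul_mul_assoc, mul_smul_comm,
          smul_sub, smul_add, smul_smul, mul_one, one_mul]; module)) (q + q⁻¹) • h2 - h4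
end

section
/- In any associative unital algebra, if A and B satisfy A^2 = [2]_q A, B^2 = [2]_q B, ABA = [2]_q(AB+BA) − [3]_q A − [2]_q^2 B + [2]_q[3]_q and BAB = [2]_q(AB+BA) − [3]_q B − [2]_q^2 A + [2]_q[3]_q, then every element of the subalgebra generated by A and B is a linear combination of 1, A, B, AB, BA; i.e., the span of {1, A, B, AB, BA} is closed under multiplication by A and B. -/
/-- If `a, b` satisfy the reduced presentation of `AW-bar(1/2,1/2,1/2)`, then every
element of the subalgebra generated by `a` and `b` is a linear combination of
`1, a, b, ab, ba`. -/
theorem AWbar_spanned {A : Type*} [Ring A] [Algebra ℂ A]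
    (q : ℂ) (hq : q ≠ 0) (a b : A)
    (h1 : a ^ 2 = (q + q⁻¹) • a)
    (h2 : b ^ 2 = (q + q⁻¹) • b)
    (h3 : a * b * a = (q + q⁻¹) • (a * b + b * a) - (q ^ 2 + 1 + q⁻¹ ^ 2) • a
        - ((q + q⁻¹) ^ 2) • b + ((q + q⁻¹) * (q ^ 2 + 1 + q⁻¹ ^ 2)) • (1 : A))
    (h4 : b * a * b = (q + q⁻¹) • (a * b + b * a) - (q ^ 2 + 1 + q⁻¹ ^ 2) • b
        - ((q + q⁻¹) ^ 2) • a + ((q + q⁻¹) * (q ^ 2 + 1 + q⁻¹ ^ 2)) • (1 : A)) :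
    ∀ x ∈ Algebra.adjoin ℂ ({a, b} : Set A),
      x ∈ Submodule.span ℂ ({1, a, b, a * b, b * a} : Set A) := by
  set M := Submodule.span ℂ ({1, a, b, a * b, b * a} : Set A) with hMdef
  have m1 : (1 : A) ∈ M := Submodule.subset_span (by simp)
  have ma : a ∈ M := Submodule.subset_span (by simp)
  have mb : b ∈ M := Submodule.subset_span (by simp)
  have mab : a * b ∈ M := Submodule.subset_span (by simp)
  have mba : b * a ∈ M := Submodule.subset_span (by simp)
  have h_aa : a * a ∈ M := by
    rw [← pow_two, h1]; exact Submodule.smul_mem _ _ ma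
  have h_bb : b * b ∈ M := by
    rw [← pow_two, h2]; exact Submodule.smul_mem _ _ mb
  have h3' : a * b * a ∈ M := by
    rw [h3]
    exact add_mem (sub_mem (sub_mem (Submodule.smul_mem _ _ (add_mem mab mba))
      (Submodule.smul_mem _ _ ma)) (Submodule.smul_mem _ _ mb)) (Submodule.smul_mem _ _ m1)
  have h4' : b * a * b ∈ M := by
    rw [h4]
    exact add_mem (sub_mem (sub_mem (Submodule.smul_mem _ _ (add_mem mab mba))
      (Submodule.smul_mem _ _ mb)) (Submodule.smul_mem _ _ ma)) (Submodule.smul_mem _ _ m1)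
  have h_aab : a * (a * b) ∈ M := by
    rw [← mul_assoc, ← pow_two, h1, smul_mul_assoc]
    exact Submodule.smul_mem _ _ mab
  have h_abb : a * b * b ∈ M := by
    rw [mul_assoc, ← pow_two, h2, mul_smul_comm]
    exact Submodule.smul_mem _ _ mab
  have h_bba : b * (b * a) ∈ M := by
    rw [← mul_assoc, ← pow_two, h2, smul_mul_assoc]
    exact Submodule.smul_mem _ _ mba
  have h_baa : b * a * a ∈ M := by
    rw [mul_assoc, ← pow_two, h1, mul_smul_comm]
    exact Submodule.smul_mem _ _ mba
  have h_aba : a * (b * a) ∈ M := by rw [← mul_assoc]; exact h3'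
  have h_bab : b * (a * b) ∈ M := by rw [← mul_assoc]; exact h4'
  have h_abab : a * b * (a * b) ∈ M := by
    have e : a * b * (a * b) = a * (b * a * b) := by
      simp only [mul_assoc]
    rw [e, h4]
    simp only [mul_add, mul_sub, mul_smul_comm, mul_one]
    exact add_mem (sub_mem (sub_mem (Submodule.smul_mem _ _ (add_mem h_aab h_aba))
      (Submodule.smul_mem _ _ mab)) (Submodule.smul_mem _ _ h_aa)) (Submodule.smul_mem _ _ ma)
  have h_baba : b * a * (b * a) ∈ M := by
    have e : b * a * (b * a) = b * (a * b * a) := by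
      simp only [mul_assoc]
    rw [e, h3]
    simp only [mul_add, mul_sub, mul_smul_comm, mul_one]
    exact add_mem (sub_mem (sub_mem (Submodule.smul_mem _ _ (add_mem h_bab h_bba))
      (Submodule.smul_mem _ _ mba)) (Submodule.smul_mem _ _ h_bb)) (Submodule.smul_mem _ _ mb)
  have h_abba : a * b * (b * a) ∈ M := by
    have e : a * b * (b * a) = a * (b * b) * a := by
      simp only [mul_assoc]
    rw [e, mul_assoc a (b*b) a, ← pow_two, h2, smul_mul_assoc, mul_smul_comm]
    exact Submodule.smul_mem _ _ h_aba
  have h_baab : b * a * (a * b) ∈ M := by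
    have e : b * a * (a * b) = b * (a * a) * b := by
      simp only [mul_assoc]
    rw [e, mul_assoc b (a*a) b, ← pow_two, h1, smul_mul_assoc, mul_smul_comm]
    exact Submodule.smul_mem _ _ h_bab
  -- closure under multiplication
  have mulmem : ∀ x ∈ M, ∀ y ∈ M, x * y ∈ M := by
    intro x hx
    induction hx using Submodule.span_induction with
    | mem w hw =>
      intro y hy
      induction hy using Submodule.span_induction with
      | mem z hz =>
        simp only [Set.mem_insert_iff, Set.mem_singleton_iff] at hw hz
        rcases hw with rfl | rfl | rfl | rfl | rfl <;>
          rcases hz with rfl | rfl | rfl | rfl | rfl <;>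
          (try simp only [one_mul, mul_one]) <;>
          first
            | exact m1 | exact ma | exact mb | exact mab | exact mba
            | exact h_aa | exact h_bb | exact h_aab | exact h_abb | exact h_bba
            | exact h_baa | exact h_aba | exact h_bab | exact h3' | exact h4'
            | exact h_abab | exact h_baba | exact h_abba | exact h_baab
      | zero => rw [mul_zero]; exact zero_mem _
      | add u v hu hv ihu ihv => rw [mul_add]; exact add_mem ihu ihv
      | smul c u hu ihu => rw [mul_smul_comm]; exact Submodule.smul_mem _ _ ihu
    | zero => intro y hy; rw [zero_mul]; exact zero_mem _
    | add u v hu hv ihu ihv =>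
      intro y hy; rw [add_mul]; exact add_mem (ihu y hy) (ihv y hy)
    | smul c u hu ihu =>
      intro y hy; rw [smul_mul_assoc]; exact Submodule.smul_mem _ _ (ihu y hy)
  intro x hx
  have hle : Algebra.adjoin ℂ ({a, b} : Set A) ≤
      M.toSubalgebra m1 (fun x y hx hy => mulmem x hx y hy) := by
    apply Algebra.adjoin_le
    intro z hz
    rcases hz with rfl | hz
    · exact ma
    · rw [Set.mem_singleton_iff] at hz; subst hz; exact mb
  exact hle hx
end

section
/- For half-integers j_a, j_b, j_c, k with k ∈ J(j_a,j_b,j_c), the set S^k(j_a,j_b,j_c) = { j ∈ J(j_a,j_b) : k ∈ J(j,j_c) } equals the interval {j_min, j_min+1, ..., j_max} where j_min = max(|j_a−j_b|, |j_c−k|) and j_max = min(j_a+j_b, j_c+k), and its cardinality is j_max − j_min + 1. -/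
set_option maxHeartbeats 1000000

/-- `J(j₁,j₂)` in doubled variables: integers between `|a−b|` and `a+b` of the same
parity as `a+b` (unit steps in the spin variable). -/
def Jd (a b : ℕ) : Finset ℕ :=
  (Finset.range (a + b + 1)).filter (fun k => max a b - min a b ≤ k ∧ k % 2 = (a + b) % 2)

/-- `J(j₁,j₂,j₃) = ⋃_{j ∈ J(j₁,j₂)} J(j,j₃)` in doubled variables. -/
def J3d (a b c : ℕ) : Finset ℕ := (Jd a b).biUnion (fun j => Jd j c)

lemma mem_Jd {a b k : ℕ} :
    k ∈ Jd a b ↔ max a b - min a b ≤ k ∧ k ≤ a + b ∧ k % 2 = (a + b) % 2 := by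
  simp only [Jd, Finset.mem_filter, Finset.mem_range]
  omega

lemma card_parity (lo hi : ℕ) (hlo : lo ≤ hi) :
    ((Finset.Icc lo hi).filter (fun j => j % 2 = lo % 2)).card = (hi - lo) / 2 + 1 := by
  have : ((Finset.Icc lo hi).filter (fun j => j % 2 = lo % 2)) =
      (Finset.range ((hi - lo) / 2 + 1)).image (fun i => lo + 2 * i) := by
    ext x
    simp only [Finset.mem_filter, Finset.mem_Icc, Finset.mem_image, Finset.mem_range]
    constructor
    · rintro ⟨⟨h1, h2⟩, h3⟩
      exact ⟨(x - lo) / 2, by omega, by omega⟩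
    · rintro ⟨i, hi', rfl⟩
      omega
  rw [this, Finset.card_image_of_injective _ (fun a b h => by omega), Finset.card_range]

/-- For `k ∈ J(j_a,j_b,j_c)`, the set `S^k(j_a,j_b,j_c) = {j ∈ J(j_a,j_b) : k ∈ J(j,j_c)}`
is the interval of spins from `j_min = max(|j_a−j_b|, |j_c−k|)` to
`j_max = min(j_a+j_b, j_c+k)` (unit spin steps, i.e. steps of 2 in doubled variables),
and its cardinality is `j_max − j_min + 1`.  All spins are doubled. -/
theorem Sk_interval (ja jb jc k : ℕ) (hk : k ∈ J3d ja jb jc) :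
    ((Jd ja jb).filter (fun j => k ∈ Jd j jc) =
      (Finset.Icc (max (max ja jb - min ja jb) (max jc k - min jc k))
          (min (ja + jb) (jc + k))).filter (fun j => j % 2 = (ja + jb) % 2)) ∧
    ((Jd ja jb).filter (fun j => k ∈ Jd j jc)).card =
      (min (ja + jb) (jc + k)
        - max (max ja jb - min ja jb) (max jc k - min jc k)) / 2 + 1 := by
  obtain ⟨j, hj, hkj⟩ := Finset.mem_biUnion.mp hk
  rw [mem_Jd] at hj hkj
  have hlohi : max (max ja jb - min ja jb) (max jc k - min jc k) ≤ min (ja + jb) (jc + k) := by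
    omega
  have hlop : (max (max ja jb - min ja jb) (max jc k - min jc k)) % 2 = (ja + jb) % 2 := by
    omega
  have heq : (Jd ja jb).filter (fun j => k ∈ Jd j jc) =
      (Finset.Icc (max (max ja jb - min ja jb) (max jc k - min jc k))
          (min (ja + jb) (jc + k))).filter (fun j => j % 2 = (ja + jb) % 2) := by
    ext x
    simp only [Finset.mem_filter, Finset.mem_Icc, mem_Jd]
    omega
  refine ⟨heq, ?_⟩
  rw [heq, ← hlop, card_parity _ _ hlohi]
end

section
/- Let q ∈ ℂ with q ≠ 0, q^2 ≠ ±1, and let j ≥ 1 be a half-integer with [2j]_q ≠ 0. In an associative unital ℂ-algebra, elements A, B satisfy A^2 = (χ̃_{j−1/2} + χ̃_{j+1/2})A − χ̃_{j−1/2}·χ̃_{j+1/2}, B^2 = [2]_q B, and BAB = [2]_q(AB+BA) − [2]_q^2 A − ([j+3/2]_q^2 + [j−1/2]_q^2 − 1)(B − [2]_q), if and only if σ0 := (χ̃_{j+1/2} − A)/[2j]_q and σ1 := [2]_q − B satisfy the one-boundary Temperley–Lieb relations σ0^2 = ([2j+1]_q/[2j]_q)σ0, σ1^2 = (q+q^{-1})σ1,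 σ1σ0σ1 = σ1. -/
/-- The `q`-number `[n]_q = (qⁿ − q⁻ⁿ)/(q − q⁻¹)`. -/
noncomputable def qint (q : ℂ) (n : ℤ) : ℂ := (q ^ n - q ^ (-n)) / (q - q⁻¹)

/-- `χ̃_m = [m]_q[m+1]_q = (q^{2m+1} + q^{-2m-1} - q - q⁻¹)/(q-q⁻¹)²`, in the doubled
variable `d = 2m`. -/
noncomputable def cht (q : ℂ) (d : ℕ) : ℂ :=
  (q ^ ((d : ℤ) + 1) + q ^ (-((d : ℤ) + 1)) - q - q⁻¹) / (q - q⁻¹) ^ 2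

/-- `[m]_q² = (q^{2m} + q^{-2m} − 2)/(q−q⁻¹)²`, in the doubled variable `d = 2m`. -/
noncomputable def qsq (q : ℂ) (d : ℕ) : ℂ :=
  (q ^ (d : ℤ) + q ^ (-(d : ℤ)) - 2) / (q - q⁻¹) ^ 2


theorem smul_cancel {A : Type*} [AddCommMonoid A] [Module ℂ A] {c : ℂ} (hc : c ≠ 0)
    {x y : A} : c • x = c • y ↔ x = y :=
  ⟨fun h => by simpa [smul_smul, inv_mul_cancel₀ hc] using congrArg (c⁻¹ • ·) h,
   fun h => by rw [h]⟩


theorem expand1 {A : Type*} [Ring A] [Algebra ℂ A] (c1 c2 ρ : ℂ) (h : c2 - c1 = ρ) (a : A) :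
    (c2 • 1 - a) ^ 2 - ρ • (c2 • (1:A) - a)
      = a ^ 2 - ((c1 + c2) • a - (c1 * c2) • (1 : A)) := by
  subst h
  simp only [pow_two, mul_sub, sub_mul, smul_mul_assoc, mul_smul_comm, mul_one, one_mul,
    smul_smul]
  module

theorem expand2 {A : Type*} [Ring A] [Algebra ℂ A] (β : ℂ) (b : A) :
    (β • 1 - b) ^ 2 - β • (β • (1:A) - b) = b ^ 2 - β • b := by
  simp only [pow_two, mul_sub, sub_mul, smul_mul_assoc, mul_smul_comm, mul_one, one_mul,
    smul_smul]
  module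

theorem expand3 {A : Type*} [Ring A] [Algebra ℂ A] (β c2 μ κ : ℂ) (h : β * c2 - μ = κ)
    (a b : A) (hb : b * b = β • b) :
    (β • 1 - b) * (c2 • (1:A) - a) * (β • 1 - b) - κ • (β • (1:A) - b)
      = (β • (a * b + b * a) - (β ^ 2) • a - μ • (b - β • (1:A))) - b * a * b := by
  subst h
  simp only [pow_two, mul_sub, sub_mul, smul_mul_assoc, mul_smul_comm, mul_one, one_mul,
    smul_smul]
  simp only [hb, smul_smul]
  module

theorem AW_scalar_ids (q : ℂ) (hq : q ≠ 0) (hq2 : q ^ 2 ≠ 1) (n : ℕ) (hn : 2 ≤ n) :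
    (cht q (n+1) - cht q (n-1) = qint q ((n:ℤ)+1)) ∧
    ((q + q⁻¹) * cht q (n+1) - (qsq q (n+3) + qsq q (n-1) - 1) = qint q (n:ℤ)) := by
  have hqq : q - q⁻¹ ≠ 0 := by
    rw [sub_ne_zero]
    intro h
    exact hq2 (by rw [pow_two]; nth_rewrite 2 [h]; exact mul_inv_cancel₀ hq)
  have hD2 : (q - q⁻¹) ^ 2 ≠ 0 := pow_ne_zero _ hqq
  have cD2 : ∀ x : ℂ, x / (q - q⁻¹) ^ 2 * (q - q⁻¹) ^ 2 = x := fun x => div_mul_cancel₀ x hD2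
  have cD1 : ∀ x : ℂ, x / (q - q⁻¹) * (q - q⁻¹) ^ 2 = x * (q - q⁻¹) := by
    intro x; rw [pow_two, ← mul_assoc, div_mul_cancel₀ _ hqq]
  unfold cht qint qsq
  have e1 : ((n + 1 : ℕ) : ℤ) = (n:ℤ) + 1 := by push_cast; ring
  have e2 : ((n - 1 : ℕ) : ℤ) = (n:ℤ) - 1 := by omega
  have e3 : ((n + 3 : ℕ) : ℤ) = (n:ℤ) + 3 := by push_cast; ring
  rw [e1, e2, e3]
  have h1 : q ^ ((n:ℤ) + 1 + 1) = q ^ (n:ℤ) * q * q := by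
    rw [zpow_add_one₀ hq, zpow_add_one₀ hq]
  have h2 : q ^ (-((n:ℤ) + 1 + 1)) = (q ^ (n:ℤ))⁻¹ * q⁻¹ * q⁻¹ := by
    rw [zpow_neg, h1, mul_inv, mul_inv]
  have h3 : q ^ ((n:ℤ) - 1 + 1) = q ^ (n:ℤ) := by norm_num
  have h4 : q ^ (-((n:ℤ) - 1 + 1)) = (q ^ (n:ℤ))⁻¹ := by rw [zpow_neg, h3]
  have h5 : q ^ ((n:ℤ) + 1) = q ^ (n:ℤ) * q := by rw [zpow_add_one₀ hq]
  have h6 : q ^ (-((n:ℤ) + 1)) = (q ^ (n:ℤ))⁻¹ * q⁻¹ := by rw [zpow_neg, h5, mul_inv]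
  have h7 : q ^ ((n:ℤ) + 3) = q ^ (n:ℤ) * q * q * q := by
    rw [show (n:ℤ) + 3 = n + 1 + 1 + 1 by ring, zpow_add_one₀ hq, h1]
  have h8 : q ^ (-((n:ℤ) + 3)) = (q ^ (n:ℤ))⁻¹ * q⁻¹ * q⁻¹ * q⁻¹ := by
    rw [zpow_neg, h7, mul_inv, mul_inv, mul_inv]
  have h9 : q ^ ((n:ℤ) - 1) = q ^ (n:ℤ) * q⁻¹ := by
    rw [show (n:ℤ) - 1 = n + (-1) by ring, zpow_add₀ hq, zpow_neg, zpow_one]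
  have h10 : q ^ (-((n:ℤ) - 1)) = (q ^ (n:ℤ))⁻¹ * q := by
    rw [zpow_neg, h9, mul_inv, inv_inv]
  have h11 : q ^ (-(n:ℤ)) = (q ^ (n:ℤ))⁻¹ := by rw [zpow_neg]
  rw [h1, h2, h3, h4, h5, h6, h7, h8, h9, h10, h11]
  have hu : q ^ (n:ℤ) ≠ 0 := zpow_ne_zero _ hq
  set u := q ^ (n:ℤ) with hud
  clear_value u
  have hcast : ((n + 1 : ℕ) : ℤ) = (n:ℤ) + 1 := e1
  have hre : ∀ x : ℂ, x / (q - q⁻¹) = x * (q - q⁻¹) / (q - q⁻¹) ^ 2 := by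
    intro x
    rw [pow_two, mul_div_mul_right _ _ hqq]
  have idA : (u * q * q + u⁻¹ * q⁻¹ * q⁻¹ - q - q⁻¹) - (u + u⁻¹ - q - q⁻¹)
      = (u * q - u⁻¹ * q⁻¹) * (q - q⁻¹) := by
    linear_combination (u + u⁻¹) * (mul_inv_cancel₀ hq)
  have idB : (q + q⁻¹) * (u * q * q + u⁻¹ * q⁻¹ * q⁻¹ - q - q⁻¹)
      = (u * q * q * q + u⁻¹ * q⁻¹ * q⁻¹ * q⁻¹ - 2) + (u * q + u⁻¹ * q⁻¹ - 2)
        - (q - q⁻¹) ^ 2 := by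
    linear_combination (u * q + u⁻¹ * q⁻¹ - 4) * (mul_inv_cancel₀ hq)
  have idC : (u * q + u⁻¹ * q⁻¹ - 2) - (u * q⁻¹ + u⁻¹ * q - 2)
      = (u - u⁻¹) * (q - q⁻¹) := by
    ring
  refine ⟨?_, ?_⟩
  · rw [hre]
    linear_combination idA / (q - q⁻¹) ^ 2
  · rw [hre]
    linear_combination (idB + idC) / (q - q⁻¹) ^ 2 - mul_inv_cancel₀ hD2

/-- For a half-integer `j ≥ 1` (encoded by `n = 2j`) with `[2j]_q ≠ 0`, elements `a, b` of
a ℂ-algebra satisfy the reduced presentation of `AW-bar(j,1/2,1/2)` iff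
`σ₀ = (χ̃_{j+1/2} − a)/[2j]_q` and `σ₁ = [2]_q − b` satisfy the one-boundary
Temperley–Lieb relations of `1bTL₂(q,2j+1)`. -/
theorem AWbar_iff_oneBoundaryTL {A : Type*} [Ring A] [Algebra ℂ A]
    (q : ℂ) (hq : q ≠ 0) (hq2 : q ^ 2 ≠ 1) (hq2' : q ^ 2 ≠ -1)
    (n : ℕ) (hn : 2 ≤ n) (hqn : qint q (n : ℤ) ≠ 0)
    (a b σ0 σ1 : A)
    (hσ0 : σ0 = (qint q (n : ℤ))⁻¹ • ((cht q (n + 1)) • (1 : A) - a))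
    (hσ1 : σ1 = (q + q⁻¹) • (1 : A) - b) :
    (a ^ 2 = (cht q (n - 1) + cht q (n + 1)) • a
        - (cht q (n - 1) * cht q (n + 1)) • (1 : A) ∧
     b ^ 2 = (q + q⁻¹) • b ∧
     b * a * b = (q + q⁻¹) • (a * b + b * a) - ((q + q⁻¹) ^ 2) • a
        - (qsq q (n + 3) + qsq q (n - 1) - 1) • (b - (q + q⁻¹) • (1 : A)))
    ↔
    (σ0 ^ 2 = (qint q ((n : ℤ) + 1) / qint q (n : ℤ)) • σ0 ∧
     σ1 ^ 2 = (q + q⁻¹) • σ1 ∧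
     σ1 * σ0 * σ1 = σ1) := by
  subst hσ0 hσ1
  obtain ⟨idA, idB⟩ := AW_scalar_ids q hq hq2 n hn
  have hκ : qint q (n : ℤ) ≠ 0 := hqn
  have I1 : ((qint q (n : ℤ))⁻¹ • ((cht q (n + 1)) • (1 : A) - a)) ^ 2
        = (qint q ((n : ℤ) + 1) / qint q (n : ℤ)) •
            ((qint q (n : ℤ))⁻¹ • ((cht q (n + 1)) • (1 : A) - a))
      ↔ a ^ 2 = (cht q (n - 1) + cht q (n + 1)) • a
          - (cht q (n - 1) * cht q (n + 1)) • (1 : A) := by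
    rw [smul_pow, smul_smul,
      show qint q ((n:ℤ)+1) / qint q (n:ℤ) * (qint q (n:ℤ))⁻¹
        = (qint q (n:ℤ))⁻¹ ^ 2 * qint q ((n:ℤ)+1) from by ring,
      ← smul_smul, smul_cancel (pow_ne_zero 2 (inv_ne_zero hκ)),
      ← sub_eq_zero, expand1 (cht q (n-1)) (cht q (n+1)) _ idA a, sub_eq_zero]
  have I2 : ((q + q⁻¹) • (1 : A) - b) ^ 2 = (q + q⁻¹) • ((q + q⁻¹) • (1 : A) - b)
      ↔ b ^ 2 = (q + q⁻¹) • b := by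
    rw [← sub_eq_zero, expand2 (q + q⁻¹) b, sub_eq_zero]
  constructor
  · rintro ⟨h1, h2, h3⟩
    have hb : b * b = (q + q⁻¹) • b := by rw [← pow_two]; exact h2
    refine ⟨I1.mpr h1, I2.mpr h2, ?_⟩
    rw [mul_smul_comm, smul_mul_assoc, inv_smul_eq_iff₀ hκ, ← sub_eq_zero,
      expand3 (q + q⁻¹) (cht q (n + 1)) _ _ idB a b hb, sub_eq_zero]
    exact h3.symm
  · rintro ⟨s1, s2, s3⟩
    have h2 : b ^ 2 = (q + q⁻¹) • b := I2.mp s2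
    have hb : b * b = (q + q⁻¹) • b := by rw [← pow_two]; exact h2
    refine ⟨I1.mp s1, h2, ?_⟩
    rw [mul_smul_comm, smul_mul_assoc, inv_smul_eq_iff₀ hκ, ← sub_eq_zero,
      expand3 (q + q⁻¹) (cht q (n + 1)) _ _ idB a b hb, sub_eq_zero] at s3
    exact s3.symm
end

section
/- Let q ∈ ℂ, q ≠ 0 and q not a root of unity, and χ_x = q^{2x+1} + q^{-2x-1}. For identical spins s and ℓ > s, the quadruple (n, x, y, z) = (3s−ℓ, ℓ−s, ℓ−s, ℓ−s) satisfies χ_{n/2}χ_{x+n/2} + χ_{y+n/2}χ_{z+n/2} = χ_s^2 + χ_s χ_ℓ (and the two analogous symmetric equations). -/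
/-- `χ_x = q^{2x+1} + q^{-2x-1}` in the doubled variable `d = 2x`. -/
noncomputable def chi (q : ℂ) (d : ℕ) : ℂ := q ^ ((d : ℤ) + 1) + q ^ (-((d : ℤ) + 1))

/-- For identical spins `s` and `ℓ > s` (doubled: `n = 2s < m = 2ℓ ≤ 3n`, same parity),
the quadruple `(n_rep,x,y,z) = (3s−ℓ, ℓ−s, ℓ−s, ℓ−s)` solves the compatibility equation
`χ_{n_rep/2}χ_{x+n_rep/2} + χ_{y+n_rep/2}χ_{z+n_rep/2} = χ_s² + χ_sχ_ℓ`, i.e.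
`χ_{(3s−ℓ)/2}χ_{(s+ℓ)/2} + χ_{(s+ℓ)/2}² = χ_s² + χ_sχ_ℓ` (with `x = y = z`, the two
analogous symmetric equations are identical). -/
theorem solution_family_two (q : ℂ) (hq : q ≠ 0)
    (hroot : ∀ k : ℕ, 0 < k → q ^ k ≠ 1)
    (n m : ℕ) (hpar : m % 2 = n % 2) (h1 : n < m) (h2 : m ≤ 3 * n) :
    chi q ((3 * n - m) / 2) * chi q ((n + m) / 2)
      + chi q ((n + m) / 2) * chi q ((n + m) / 2)
    = chi q n * chi q n + chi q n * chi q m := by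
  have key : ∀ x y : ℤ, (q^(x+1)+q^(-(x+1)))*(q^(y+1)+q^(-(y+1)))
      = q^(x+y+2) + q^(x-y) + q^(y-x) + q^(-(x+y+2)) := by
    intro x y
    have hx : q ^ x ≠ 0 := zpow_ne_zero _ hq
    have hy : q ^ y ≠ 0 := zpow_ne_zero _ hq
    simp only [zpow_add₀ hq, zpow_sub₀ hq, zpow_neg, zpow_one,
      zpow_ofNat]
    field_simp
    ring
  set A : ℕ := (3 * n - m) / 2 with hAdef
  set B : ℕ := (n + m) / 2 with hBdef
  have hB : 2 * B = n + m := by omega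
  have hA : 2 * A = 3 * n - m := by omega
  simp only [chi, key]
  have e1 : (A:ℤ)+B+2 = 2*n+2 := by omega
  have e2 : (A:ℤ)-B = (n:ℤ)-m := by omega
  have e3 : (B:ℤ)-A = (m:ℤ)-n := by omega
  have e4 : (B:ℤ)+B+2 = (n:ℤ)+m+2 := by omega
  have e5 : (n:ℤ)+n+2 = 2*(n:ℤ)+2 := by ring
  have e6 : (B:ℤ)-B = 0 := by ring
  have e7 : (n:ℤ)-n = 0 := by ring
  rw [e1, e2, e3, e4, e5, e6, e7]
  ring
end
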